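/- arXiv:1611.00957 — 2 statements merged into one kernel-verified Lean document; each statement's English description precedes it below -/
import Mathlib

section
/- Let α ≥ 1 and β > 0 be real numbers and let s ≥ 1 be an integer. Then for every real z with -1 < z < 1/3, ∑_{n≥0} z^n/(αn+β)^s = β^{-s} + ∑_{j≥1} ( ∑_{m=1}^{j} C(j,m) (-1)^{j-m} (αm+β)^{-s} ) · z^j/(1-z)^{j+1}, where both series converge and C(j,m) denotes the binomial coefficient. -/
/-!
With `r = z / (1 - z)` one has `z ^ m = r ^ m (1 + r) ^ (-(m + 1)) / (1 - z)`, so expanding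
`(1 + r) ^ (-(m + 1))` binomially writes `∑ aₘ zᵐ` as a double series in `r`. Collecting the terms
with a common power `r ^ j` produces the `j`-th forward difference of `a` at `0` (Euler's series
transformation). For bounded `a` the double series converges absolutely when
`∑_{m + k = j} C(j, m) |r| ^ j = (2 |r|) ^ j` is summable, and `2 |r| < 1` is exactly
`2 |z| < 1 - z`, i.e. `-1 < z < 1/3`. Applying the transformation to `a` with `a 0` replaced by `0`
separates the term `β ^ (-s)`.
-/

open Finset fwdDiff

theorem HasSum.sum_antidiagonal {A α : Type*} [AddMonoid A] [HasAntidiagonal A]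
    [AddCommMonoid α] [TopologicalSpace α] [ContinuousAdd α] [RegularSpace α]
    {f : A × A → α} {a : α} (hf : HasSum f a) :
    HasSum (fun n => ∑ p ∈ antidiagonal n, f p) a :=
  (HasAntidiagonal.sigmaAntidiagonalEquivProd.hasSum_iff.2 hf).sigma fun n =>
    (antidiagonal n).hasSum f

theorem fwdDiff_iter_one_apply_zero (a : ℕ → ℝ) (j : ℕ) :
    (Δ_[1])^[j] a 0 = ∑ m ∈ range (j + 1), (j.choose m : ℝ) * (-1) ^ (j - m) * a m := by
  rw [fwdDiff_iter_eq_sum_shift]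
  refine sum_congr rfl fun m _ => ?_
  simp only [zsmul_eq_mul, Int.cast_mul, Int.cast_pow, Int.cast_neg, Int.cast_one,
    Int.cast_natCast, smul_eq_mul, mul_one, zero_add]
  ring

theorem summable_choose_mul_pow_add {t : ℝ} (ht₀ : 0 ≤ t) (ht : 2 * t < 1) :
    Summable fun p : ℕ × ℕ => ((p.2 + p.1).choose p.1 : ℝ) * t ^ (p.1 + p.2) := by
  have ht₁ : t < 1 := by linarith
  have hrow (m : ℕ) : HasSum (fun k => ((k + m).choose m : ℝ) * t ^ (m + k))
      ((t / (1 - t)) ^ m * (1 - t)⁻¹) := by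
    have h := (hasSum_choose_mul_geometric_of_norm_lt_one m
      (by rwa [Real.norm_of_nonneg ht₀])).mul_right (t ^ m)
    rw [show 1 / (1 - t) ^ (m + 1) * t ^ m = (t / (1 - t)) ^ m * (1 - t)⁻¹ by
      rw [div_pow, pow_succ]; field_simp] at h
    exact h.congr_fun fun k => by ring
  refine (summable_prod_of_nonneg fun p => by positivity).2 ⟨fun m => (hrow m).summable, ?_⟩
  simp only [fun m => (hrow m).tsum_eq]
  refine (summable_geometric_of_lt_one (div_nonneg ht₀ (by linarith)) ?_).mul_right _
  rw [div_lt_one (by linarith)]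
  linarith

noncomputable def eulerDoubleTerm (a : ℕ → ℝ) (z : ℝ) (p : ℕ × ℕ) : ℝ :=
  (p.2 + p.1).choose p.1 * (-1) ^ p.2 * a p.1 * (z / (1 - z)) ^ (p.1 + p.2) / (1 - z)

section EulerTransform

variable {a : ℕ → ℝ} {z : ℝ} {C : ℝ}

theorem two_mul_abs_div_one_sub_lt_one (hz : 2 * |z| < 1 - z) : 2 * |z / (1 - z)| < 1 := by
  have h : 0 < 1 - z := by linarith [abs_nonneg z]
  rwa [abs_div, abs_of_pos h, mul_div_assoc', div_lt_one h]

theorem hasSum_eulerDoubleTerm_row (hz : 2 * |z| < 1 - z) (m : ℕ) :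
    HasSum (fun k => eulerDoubleTerm a z (m, k)) (z ^ m * a m) := by
  have h₀ : 1 - z ≠ 0 := by linarith [abs_nonneg z]
  have hr : ‖-(z / (1 - z))‖ < 1 := by
    rw [norm_neg, Real.norm_eq_abs]
    linarith [two_mul_abs_div_one_sub_lt_one hz, abs_nonneg (z / (1 - z))]
  have hval : a m * (z / (1 - z)) ^ m / (1 - z) * (1 / (1 - -(z / (1 - z))) ^ (m + 1)) =
      z ^ m * a m := by
    rw [sub_neg_eq_add, show 1 + z / (1 - z) = 1 / (1 - z) by field_simp; ring]
    rw [one_div_pow, one_div_one_div, div_pow, pow_succ]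
    field_simp
  have h := (hasSum_choose_mul_geometric_of_norm_lt_one m hr).mul_left
    (a m * (z / (1 - z)) ^ m / (1 - z))
  rw [hval] at h
  refine h.congr_fun fun k => ?_
  rw [eulerDoubleTerm, neg_pow, pow_add]
  ring

theorem summable_eulerDoubleTerm (ha : ∀ n, |a n| ≤ C) (hz : 2 * |z| < 1 - z) :
    Summable (eulerDoubleTerm a z) := by
  have h₀ : 0 < 1 - z := by linarith [abs_nonneg z]
  refine ((summable_choose_mul_pow_add (abs_nonneg _) (two_mul_abs_div_one_sub_lt_one hz)).mul_left
    (C / (1 - z))).of_norm_bounded fun p => ?_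
  rw [Real.norm_eq_abs, eulerDoubleTerm, abs_div, abs_of_pos h₀, abs_mul, abs_mul, abs_mul,
    abs_pow, abs_neg, abs_one, one_pow, mul_one, Nat.abs_cast, abs_pow]
  calc _ = (p.2 + p.1).choose p.1 * |z / (1 - z)| ^ (p.1 + p.2) * |a p.1| / (1 - z) := by ring
    _ ≤ (p.2 + p.1).choose p.1 * |z / (1 - z)| ^ (p.1 + p.2) * C / (1 - z) := by
      gcongr
      exact ha p.1
    _ = _ := by ring

theorem sum_antidiagonal_eulerDoubleTerm (j : ℕ) :
    ∑ p ∈ antidiagonal j, eulerDoubleTerm a z p =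
      z ^ j / (1 - z) ^ (j + 1) * (Δ_[1])^[j] a 0 := by
  rw [Nat.sum_antidiagonal_eq_sum_range_succ_mk, fwdDiff_iter_one_apply_zero, mul_sum]
  refine sum_congr rfl fun m hm => ?_
  have hm : m ≤ j := Nat.lt_succ_iff.1 (mem_range.1 hm)
  simp only [eulerDoubleTerm, Nat.sub_add_cancel hm, Nat.add_sub_cancel' hm, div_pow]
  generalize 1 - z = w
  ring

theorem hasSum_pow_mul_tsum_eulerDoubleTerm (ha : ∀ n, |a n| ≤ C) (hz : 2 * |z| < 1 - z) :
    HasSum (fun n => z ^ n * a n) (∑' p, eulerDoubleTerm a z p) :=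
  (summable_eulerDoubleTerm ha hz).hasSum.prod_fiberwise (hasSum_eulerDoubleTerm_row hz)

theorem summable_pow_mul (ha : ∀ n, |a n| ≤ C) (hz : 2 * |z| < 1 - z) :
    Summable fun n => z ^ n * a n :=
  (hasSum_pow_mul_tsum_eulerDoubleTerm ha hz).summable

theorem hasSum_euler_transform (ha : ∀ n, |a n| ≤ C) (hz : 2 * |z| < 1 - z) :
    HasSum (fun j => z ^ j / (1 - z) ^ (j + 1) * (Δ_[1])^[j] a 0) (∑' n, z ^ n * a n) := by
  rw [(hasSum_pow_mul_tsum_eulerDoubleTerm ha hz).tsum_eq]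
  simpa only [sum_antidiagonal_eulerDoubleTerm] using
    (summable_eulerDoubleTerm ha hz).hasSum.sum_antidiagonal

theorem hasSum_euler_transform_sub_apply_zero (ha : ∀ n, |a n| ≤ C) (hz : 2 * |z| < 1 - z) :
    HasSum (fun j => (∑ m ∈ Icc 1 (j + 1), ((j + 1).choose m : ℝ) * (-1) ^ (j + 1 - m) * a m) *
      z ^ (j + 1) / (1 - z) ^ (j + 2)) (∑' n, z ^ n * a n - a 0) := by
  set b := Function.update a 0 0
  have hb : ∀ n, |b n| ≤ C := by
    intro n
    rcases eq_or_ne n 0 with rfl | hn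
    · simpa [b] using (abs_nonneg _).trans (ha 0)
    · simpa [b, hn] using ha n
  have htsum : ∑' n, z ^ n * b n = ∑' n, z ^ n * a n - a 0 := by
    rw [(summable_pow_mul hb hz).tsum_eq_zero_add, (summable_pow_mul ha hz).tsum_eq_zero_add]
    simp [b]
  have hcoeff (j : ℕ) :
      (Δ_[1])^[j] b 0 = ∑ m ∈ Icc 1 j, (j.choose m : ℝ) * (-1) ^ (j - m) * a m := by
    have hsub : Icc 1 j ⊆ range (j + 1) := fun m hm => by
      rw [mem_Icc] at hm
      rw [mem_range]
      omega
    rw [fwdDiff_iter_one_apply_zero, ← sum_subset hsub]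
    · refine sum_congr rfl fun m hm => ?_
      have hm0 : m ≠ 0 := by
        rw [mem_Icc] at hm
        omega
      rw [show b m = a m from Function.update_of_ne hm0 _ _]
    · intro m hmj hm
      obtain rfl : m = 0 := by
        rw [mem_Icc] at hm
        rw [mem_range] at hmj
        omega
      simp [b]
  have h := (hasSum_nat_add_iff' 1).2 (hasSum_euler_transform hb hz)
  simp only [sum_range_one, Function.iterate_zero, id, b, Function.update_self, mul_zero,
    sub_zero, htsum] at h
  refine h.congr_fun fun j => ?_
  rw [hcoeff]
  ring

end EulerTransform

theorem stmt_5_general (α β : ℝ) (hα : 1 ≤ α) (hβ : 0 < β) (s : ℕ)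
    (z : ℝ) (hz₁ : -1 < z) (hz₂ : z < 1 / 3) :
    Summable (fun n : ℕ => z ^ n / (α * n + β) ^ s) ∧
    Summable (fun j : ℕ =>
      (∑ m ∈ Finset.Icc 1 (j + 1),
        ((j + 1).choose m : ℝ) * (-1) ^ (j + 1 - m) / (α * m + β) ^ s) *
        z ^ (j + 1) / (1 - z) ^ (j + 2)) ∧
    (∑' n : ℕ, z ^ n / (α * n + β) ^ s) =
      1 / β ^ s +
        ∑' j : ℕ,
          (∑ m ∈ Finset.Icc 1 (j + 1),
            ((j + 1).choose m : ℝ) * (-1) ^ (j + 1 - m) / (α * m + β) ^ s) *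
            z ^ (j + 1) / (1 - z) ^ (j + 2) := by
  have hz : 2 * |z| < 1 - z := by
    rcases abs_cases z with ⟨h, _⟩ | ⟨h, _⟩ <;> rw [h] <;> linarith
  have ha (n : ℕ) : |1 / (α * n + β) ^ s| ≤ 1 / β ^ s := by
    have hαn : 0 ≤ α * n := by positivity
    rw [abs_of_pos (by positivity)]
    gcongr
    linarith
  have hS := summable_pow_mul ha hz
  have hE := hasSum_euler_transform_sub_apply_zero ha hz
  simp only [mul_one_div, Nat.cast_zero, mul_zero, zero_add] at hS hE
  refine ⟨hS, hE.summable, ?_⟩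
  rw [hE.tsum_eq]
  ring

/-- Series expansion of the modified Lerch transcendent function by the
generalized zeta series transformation coefficients. -/
theorem stmt_5 (α β : ℝ) (hα : 1 ≤ α) (hβ : 0 < β) (s : ℕ) (hs : 1 ≤ s)
    (z : ℝ) (hz₁ : -1 < z) (hz₂ : z < 1 / 3) :
    Summable (fun n : ℕ => z ^ n / (α * n + β) ^ s) ∧
    Summable (fun j : ℕ =>
      (∑ m ∈ Finset.Icc 1 (j + 1),
        ((j + 1).choose m : ℝ) * (-1) ^ (j + 1 - m) / (α * m + β) ^ s) *
        z ^ (j + 1) / (1 - z) ^ (j + 2)) ∧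
    (∑' n : ℕ, z ^ n / (α * n + β) ^ s) =
      1 / β ^ s +
        ∑' j : ℕ,
          (∑ m ∈ Finset.Icc 1 (j + 1),
            ((j + 1).choose m : ℝ) * (-1) ^ (j + 1 - m) / (α * m + β) ^ s) *
            z ^ (j + 1) / (1 - z) ^ (j + 2) :=
  stmt_5_general α β hα hβ s z hz₁ hz₂
end

section
/- ∑_{n≥0} (-1)^n/(2n+1)^2 = ∑_{j≥0} (1/2^{j+1}) · ( ∏_{i=1}^{j} (2i)/(2i+1) ) · ( 1 + ∑_{k=1}^{j} 1/(2k+1) ), where both series converge and the empty product and empty sum (j = 0) equal 1 and 0 respectively. -/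
/-!
Euler's series transformation: if `∑ |b k| < ∞` then
`∑ b k = ∑_j 2^{-(j+1)} ∑_{k ≤ j} C(j,k) b k`, since `∑_j C(j,k) / 2^{j+1} = 1` for every `k`
and the double series converges absolutely. For `b k = (-1)^k / (2k+1)^2` the inner sum is
`f_j(1)`, where `f_j(c) = ∑_k (-1)^k C(j,k) / (2k+c)^2`. Pascal's rule gives
`f_{j+1}(c) = f_j(c) - f_j(c+2)`, and induction on `j` then yields
`f_j(c) = j! 2^j / ∏_{i ≤ j} (c+2i) · ∑_{i ≤ j} 1/(c+2i)`; at `c = 1` this is the product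
`∏_{i=1}^{j} 2i/(2i+1)` times `1 + ∑_{k=1}^{j} 1/(2k+1)`.
-/

open Finset Nat

theorem sum_range_succ_alternating_choose_mul {R : Type*} [CommRing R] (g : ℕ → R) (j : ℕ) :
    ∑ k ∈ range (j + 2), (-1) ^ k * ((j + 1).choose k : R) * g k =
      ∑ k ∈ range (j + 1), (-1) ^ k * (j.choose k : R) * (g k - g (k + 1)) := by
  have hshift : ∑ k ∈ range (j + 1), (-1) ^ k * (j.choose k : R) * g k =
      g 0 - ∑ k ∈ range (j + 1), (-1) ^ k * (j.choose (k + 1) : R) * g (k + 1) := by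
    rw [sum_range_succ' _ j, sum_range_succ _ j]
    simp only [pow_succ, mul_neg, mul_one, neg_mul, sum_neg_distrib, pow_zero, choose_zero_right,
      cast_one, one_mul, choose_succ_self, cast_zero, mul_zero, zero_mul, add_zero]
    ring
  rw [sum_range_succ']
  simp only [mul_sub, sum_sub_distrib, hshift, Nat.choose_succ_succ', Nat.cast_add, pow_succ,
    mul_add, add_mul, sum_add_distrib]
  simp only [mul_neg, mul_one, neg_mul, sum_neg_distrib, pow_zero, choose_zero_right, cast_one,
    one_mul]
  ring

theorem sum_range_alternating_choose_div_sq {K : Type*} [Field K] (j : ℕ) (c d : K)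
    (h : ∀ i : ℕ, d * i + c ≠ 0) :
    ∑ k ∈ range (j + 1), (-1) ^ k * (j.choose k : K) / (d * k + c) ^ 2 =
      j ! * d ^ j / (∏ i ∈ range (j + 1), (d * i + c)) * ∑ i ∈ range (j + 1), 1 / (d * i + c) := by
  induction j generalizing c with
  | zero => simp [sq]
  | succ j ih =>
    have h' : ∀ i : ℕ, d * i + (c + d) ≠ 0 := fun i => by
      simpa [add_assoc, mul_add, add_comm, add_left_comm] using h (i + 1)
    have hshift : ∀ i : ℕ, d * ((i + 1 : ℕ) : K) + c = d * i + (c + d) := fun i => by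
      push_cast; ring
    have hrec := sum_range_succ_alternating_choose_mul (fun k : ℕ => 1 / (d * k + c) ^ 2) j
    simp only [mul_sub, sum_sub_distrib, mul_one_div, hshift] at hrec
    rw [hrec, ih c h, ih (c + d) h']
    have hprod := prod_range_succ' (fun i : ℕ => d * i + c) (j + 1)
    have hsum := sum_range_succ' (fun i : ℕ => 1 / (d * i + c)) (j + 1)
    rw [prod_range_succ _ (j + 1)] at hprod ⊢
    rw [sum_range_succ _ (j + 1)] at hsum ⊢
    simp only [hshift, Nat.cast_zero, mul_zero, zero_add] at hprod hsum ⊢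
    have hc : c ≠ 0 := by simpa using h 0
    have hq := h' j
    have hP : ∏ i ∈ range (j + 1), (d * i + c) ≠ 0 := prod_ne_zero_iff.mpr fun i _ => h i
    rw [eq_div_of_mul_eq hc hprod.symm, eq_sub_of_add_eq hsum.symm, factorial_succ]
    push_cast
    field_simp
    ring

theorem hasSum_choose_div_two_pow_succ (k : ℕ) :
    HasSum (fun j : ℕ => (j.choose k : ℝ) / 2 ^ (j + 1)) 1 := by
  have hgeom := (hasSum_choose_mul_geometric_of_norm_lt_one k
    (r := (1 / 2 : ℝ)) (by norm_num)).mul_right ((1 / 2) ^ (k + 1))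
  have hvalue : (1 / (1 - 1 / 2) ^ (k + 1) * (1 / 2) ^ (k + 1) : ℝ) = 1 := by
    norm_num
  rw [hvalue] at hgeom
  have hshifted : HasSum (fun n : ℕ => ((n + k).choose k : ℝ) / 2 ^ (n + k + 1)) 1 :=
    hgeom.congr_fun fun n => by
      rw [one_div, inv_pow, inv_pow, mul_assoc, ← mul_inv, ← pow_add, ← div_eq_mul_inv, add_assoc]
  rwa [hasSum_nat_add_iff (f := fun j : ℕ => (j.choose k : ℝ) / 2 ^ (j + 1)),
    sum_eq_zero fun i hi => by simp [Nat.choose_eq_zero_of_lt (mem_range.mp hi)], add_zero]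
    at hshifted

theorem hasSum_euler_transform_s7 {b : ℕ → ℝ} (hb : Summable fun k => |b k|) :
    HasSum (fun j => (∑ k ∈ range (j + 1), (j.choose k : ℝ) * b k) / 2 ^ (j + 1)) (∑' k, b k) := by
  set G : ℕ × ℕ → ℝ := fun p => b p.1 * ((p.2.choose p.1 : ℝ) / 2 ^ (p.2 + 1))
  have hfiber : ∀ k, HasSum (fun j => G (k, j)) (b k) := fun k => by
    simpa using (hasSum_choose_div_two_pow_succ k).mul_left (b k)
  have habs_fiber : ∀ k, HasSum (fun j => |G (k, j)|) |b k| := fun k => by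
    simpa [G, abs_mul, abs_div] using (hasSum_choose_div_two_pow_succ k).mul_left |b k|
  have hG : Summable G := by
    refine Summable.of_abs ((summable_prod_of_nonneg fun _ => abs_nonneg _).mpr
      ⟨fun k => (habs_fiber k).summable, ?_⟩)
    simpa only [(habs_fiber _).tsum_eq] using hb
  have hGsum : HasSum G (∑' k, b k) := by
    convert hG.hasSum using 1
    rw [hG.tsum_prod' fun k => (hfiber k).summable]
    exact tsum_congr fun k => (hfiber k).tsum_eq.symm
  refine ((Equiv.prodComm ℕ ℕ).hasSum_iff.mpr hGsum).prod_fiberwise fun j => ?_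
  have hsupp : ∀ k ∉ range (j + 1), G (k, j) = 0 := fun k hk => by
    simp [G, Nat.choose_eq_zero_of_lt (not_le.mp (mt mem_range_succ_iff.mpr hk))]
  have hfin : HasSum (fun k => G (k, j)) (∑ k ∈ range (j + 1), G (k, j)) :=
    hasSum_sum_of_ne_finset_zero hsupp
  have hvalue : (∑ k ∈ range (j + 1), (j.choose k : ℝ) * b k) / 2 ^ (j + 1) =
      ∑ k ∈ range (j + 1), G (k, j) := by
    rw [sum_div]
    exact sum_congr rfl fun k _ => by simp only [G]; ring
  rw [hvalue]
  exact hfin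

theorem prod_Icc_two_mul_div_two_mul_add_one (j : ℕ) :
    ∏ i ∈ Icc 1 j, (2 * i : ℝ) / (2 * i + 1) =
      j ! * 2 ^ j / ∏ i ∈ range (j + 1), (2 * i + 1 : ℝ) := by
  induction j with
  | zero => simp
  | succ j ih =>
    rw [prod_Icc_succ_top (by omega), ih, prod_range_succ _ (j + 1), factorial_succ]
    push_cast
    field_simp
    ring

theorem sum_range_succ_eq_add_sum_Icc {M : Type*} [AddCommMonoid M] (f : ℕ → M) (j : ℕ) :
    ∑ k ∈ range (j + 1), f k = f 0 + ∑ k ∈ Icc 1 j, f k := by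
  rw [range_eq_Ico, sum_eq_sum_Ico_succ_bot (by omega : 0 < j + 1), zero_add,
    Ico_add_one_right_eq_Icc]

theorem sum_range_choose_mul_neg_one_pow_div_odd_sq (j : ℕ) :
    ∑ k ∈ range (j + 1), (j.choose k : ℝ) * ((-1) ^ k / (2 * k + 1) ^ 2) =
      (∏ i ∈ Icc 1 j, (2 * i : ℝ) / (2 * i + 1)) * (1 + ∑ k ∈ Icc 1 j, (1 : ℝ) / (2 * k + 1)) := by
  have h := sum_range_alternating_choose_div_sq j (1 : ℝ) 2 fun i => by positivity
  have hharmonic : 1 + ∑ k ∈ Icc 1 j, (1 : ℝ) / (2 * k + 1) =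
      ∑ i ∈ range (j + 1), (1 : ℝ) / (2 * i + 1) := by
    rw [sum_range_succ_eq_add_sum_Icc]
    norm_num
  rw [prod_Icc_two_mul_div_two_mul_add_one, hharmonic, ← h]
  exact sum_congr rfl fun k _ => by ring

/-- New series for the Dirichlet beta function value `β(2)` (Catalan's constant). -/
theorem stmt_7 :
    Summable (fun n : ℕ => (-1 : ℝ) ^ n / (2 * n + 1) ^ 2) ∧
    Summable (fun j : ℕ =>
      (1 / 2 ^ (j + 1)) * (∏ i ∈ Finset.Icc 1 j, (2 * i : ℝ) / (2 * i + 1)) *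
        (1 + ∑ k ∈ Finset.Icc 1 j, (1 : ℝ) / (2 * k + 1))) ∧
    (∑' n : ℕ, (-1 : ℝ) ^ n / (2 * n + 1) ^ 2) =
      ∑' j : ℕ,
        (1 / 2 ^ (j + 1)) * (∏ i ∈ Finset.Icc 1 j, (2 * i : ℝ) / (2 * i + 1)) *
          (1 + ∑ k ∈ Finset.Icc 1 j, (1 : ℝ) / (2 * k + 1)) := by
  have habs : Summable fun n : ℕ => |(-1 : ℝ) ^ n / (2 * n + 1) ^ 2| := by
    have hodd := (Real.summable_one_div_nat_pow.mpr one_lt_two).comp_injective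
      (fun m n h => by simpa using h : Function.Injective fun n : ℕ => 2 * n + 1)
    refine hodd.congr fun n => ?_
    simp [abs_div]
  have htransform := hasSum_euler_transform_s7 habs
  have hterms : ∀ j : ℕ,
      (∑ k ∈ range (j + 1), (j.choose k : ℝ) * ((-1) ^ k / (2 * k + 1) ^ 2)) / 2 ^ (j + 1) =
        (1 / 2 ^ (j + 1)) * (∏ i ∈ Icc 1 j, (2 * i : ℝ) / (2 * i + 1)) *
          (1 + ∑ k ∈ Icc 1 j, (1 : ℝ) / (2 * k + 1)) := fun j => by
    rw [sum_range_choose_mul_neg_one_pow_div_odd_sq]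
    ring
  simp only [hterms] at htransform
  exact ⟨habs.of_abs, htransform.summable, htransform.tsum_eq.symm⟩
end
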